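/- If H is a subquasi-ideal of a Leibniz algebra L over a field F, then (H²)^ω := ∩_{n≥1} (H²)^n is a characteristic ideal of L, where H² = [H,H] and (H²)^n is the n-th term of the lower central series of the subalgebra H². -/
import Mathlib


/-! Basic definitions for (right) Leibniz algebras given by a bilinear bracket
on a vector space, following Towers, "Quasi-ideals of Leibniz algebras". -/

section LeibnizDefs

variable {F L : Type*} [Field F] [AddCommGroup L] [Module F L]

/-- The (right) Leibniz identity for a bilinear bracket `b`:
`[x,[y,z]] = [[x,y],z] - [[x,z],y]`. -/
def IsLeibniz (b : L →ₗ[F] L →ₗ[F] L) : Prop :=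
  ∀ x y z : L, b x (b y z) = b (b x y) z - b (b x z) y

/-- `[A,C]`: the span of all brackets `[a,c]` with `a ∈ A`, `c ∈ C`. -/
def bspan (b : L →ₗ[F] L →ₗ[F] L) (A C : Submodule F L) : Submodule F L :=
  Submodule.span F {z : L | ∃ a ∈ A, ∃ c ∈ C, z = b a c}

/-- A subalgebra is a subspace `H` with `[H,H] ⊆ H`. -/
def IsSubalgebra (b : L →ₗ[F] L →ₗ[F] L) (H : Submodule F L) : Prop :=
  bspan b H H ≤ H

/-- An ideal is a subspace `A` with `[A,L] + [L,A] ⊆ A`. -/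
def IsIdeal (b : L →ₗ[F] L →ₗ[F] L) (A : Submodule F L) : Prop :=
  bspan b A ⊤ ⊔ bspan b ⊤ A ≤ A

/-- A quasi-ideal of `L` is a subspace `H` with `[H,K] + [K,H] ⊆ H + K`
for every subspace `K` of `L`. -/
def IsQuasiIdeal (b : L →ₗ[F] L →ₗ[F] L) (H : Submodule F L) : Prop :=
  ∀ K : Submodule F L, bspan b H K ⊔ bspan b K H ≤ H ⊔ K

/-- `H` is a quasi-ideal of the subalgebra `E`: `H ⊆ E` and
`[H,K] + [K,H] ⊆ H + K` for every subspace `K` of `E`. -/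
def IsQuasiIdealIn (b : L →ₗ[F] L →ₗ[F] L) (H E : Submodule F L) : Prop :=
  H ≤ E ∧ ∀ K : Submodule F L, K ≤ E → bspan b H K ⊔ bspan b K H ≤ H ⊔ K

/-- `H` is an `m`-step subquasi-ideal of `L`: there is a chain of subalgebras
`H = H_m qu H_{m-1} qu ... qu H_0 = L`, each a quasi-ideal of the next.
(Here `C i` is `H_i`.) -/
def IsSubquasiIdealSteps (b : L →ₗ[F] L →ₗ[F] L) (m : ℕ) (H : Submodule F L) : Prop :=
  ∃ C : ℕ → Submodule F L, C 0 = ⊤ ∧ C m = H ∧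
    (∀ i ≤ m, IsSubalgebra b (C i)) ∧
    ∀ i < m, IsQuasiIdealIn b (C (i + 1)) (C i)

/-- `H` is a subquasi-ideal of `L` if it is an `m`-step subquasi-ideal for some `m`. -/
def IsSubquasiIdeal (b : L →ₗ[F] L →ₗ[F] L) (H : Submodule F L) : Prop :=
  ∃ m : ℕ, IsSubquasiIdealSteps b m H

/-- Lower central series: `lowerCentral b K n` is `K^{n+1}` in the paper's notation,
i.e. `K^1 = K`, `K^{k+1} = [K^k, K]`. -/
def lowerCentral (b : L →ₗ[F] L →ₗ[F] L) (K : Submodule F L) : ℕ → Submodule F L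
  | 0 => K
  | n + 1 => bspan b (lowerCentral b K n) K

/-- Derived series: `derSeries b H n` is `H^{(n+1)}` in the paper's notation,
i.e. `H^{(1)} = H`, `H^{(k+1)} = [H^{(k)}, H^{(k)}]`. -/
def derSeries (b : L →ₗ[F] L →ₗ[F] L) (H : Submodule F L) : ℕ → Submodule F L
  | 0 => H
  | n + 1 => bspan b (derSeries b H n) (derSeries b H n)

/-- The core `H_L` of `H`: the sum of all ideals of `L` contained in `H`. -/
def coreOf (b : L →ₗ[F] L →ₗ[F] L) (H : Submodule F L) : Submodule F L :=
  sSup {A : Submodule F L | IsIdeal b A ∧ A ≤ H}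

/-- A derivation of the bracket `b`. -/
def IsDerivation (b : L →ₗ[F] L →ₗ[F] L) (d : L →ₗ[F] L) : Prop :=
  ∀ x y : L, d (b x y) = b (d x) y + b x (d y)

/-- `I`: the span of all squares `[x,x]`, `x ∈ L`. -/
def sqSpan (b : L →ₗ[F] L →ₗ[F] L) : Submodule F L :=
  Submodule.span F {z : L | ∃ x : L, z = b x x}

/-- The centre `Z(L) = {z | [z,x] = [x,z] = 0 for all x}`. -/
def lcenter (b : L →ₗ[F] L →ₗ[F] L) : Submodule F L where
  carrier := {z : L | ∀ x : L, b z x = 0 ∧ b x z = 0}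
  zero_mem' := by intro x; simp
  add_mem' := by
    intro y z hy hz x
    obtain ⟨h1, h2⟩ := hy x
    obtain ⟨h3, h4⟩ := hz x
    constructor <;> simp [h1, h2, h3, h4]
  smul_mem' := by
    intro c z hz x
    obtain ⟨h1, h2⟩ := hz x
    constructor <;> simp [h1, h2]

/-- The centre of a subalgebra `E`, as a subspace of `L`:
`Z(E) = {z ∈ E | [z,x] = [x,z] = 0 for all x ∈ E}`. -/
def centerIn (b : L →ₗ[F] L →ₗ[F] L) (E : Submodule F L) : Submodule F L where
  carrier := {z : L | z ∈ E ∧ ∀ x ∈ E, b z x = 0 ∧ b x z = 0}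
  zero_mem' := ⟨E.zero_mem, by intro x _; simp⟩
  add_mem' := by
    intro y z hy hz
    refine ⟨E.add_mem hy.1 hz.1, fun x hx => ?_⟩
    obtain ⟨h1, h2⟩ := hy.2 x hx
    obtain ⟨h3, h4⟩ := hz.2 x hx
    constructor <;> simp [h1, h2, h3, h4]
  smul_mem' := by
    intro c z hz
    refine ⟨E.smul_mem c hz.1, fun x hx => ?_⟩
    obtain ⟨h1, h2⟩ := hz.2 x hx
    constructor <;> simp [h1, h2]

/-- The subalgebra generated by a set `S`. -/
def subalgGen (b : L →ₗ[F] L →ₗ[F] L) (S : Set L) : Submodule F L :=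
  sInf {K : Submodule F L | IsSubalgebra b K ∧ S ⊆ K}

/-- `x` is a left Engel element: for each `y` there is `n` with `R_x^n(y) = 0`,
where `R_x(y) = [y,x]`. -/
def IsLeftEngel (b : L →ₗ[F] L →ₗ[F] L) (x : L) : Prop :=
  ∀ y : L, ∃ n : ℕ, ((b.flip x) ^ n) y = 0

end LeibnizDefs

variable {F L : Type*} [Field F] [AddCommGroup L] [Module F L]

section AuxLemmas

variable (b : L →ₗ[F] L →ₗ[F] L)

lemma mem_bspan' {A C : Submodule F L} {a c : L} (ha : a ∈ A) (hc : c ∈ C) :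
    b a c ∈ bspan b A C :=
  Submodule.subset_span ⟨a, ha, c, hc, rfl⟩

lemma bspan_le' {A C X : Submodule F L} (h : ∀ a ∈ A, ∀ c ∈ C, b a c ∈ X) :
    bspan b A C ≤ X := by
  apply Submodule.span_le.mpr
  rintro z ⟨a, ha, c, hc, rfl⟩
  exact h a ha c hc

lemma bspan_mono' {A C A' C' : Submodule F L} (hA : A ≤ A') (hC : C ≤ C') :
    bspan b A C ≤ bspan b A' C' :=
  bspan_le' b fun a ha c hc => mem_bspan' b (hA ha) (hC hc)

/-- A pair-membership form of span-induction for `bspan`. -/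
lemma bspan_pair_ind {A C X Y : Submodule F L} {f g : L → L}
    (hf : IsLinearMap F f) (hg : IsLinearMap F g)
    (h : ∀ a ∈ A, ∀ c ∈ C, f (b a c) ∈ X ∧ g (b a c) ∈ Y) :
    ∀ z ∈ bspan b A C, f z ∈ X ∧ g z ∈ Y := by
  intro z hz
  have hle : bspan b A C ≤ X.comap hf.mk' ⊓ Y.comap hg.mk' :=
    bspan_le' b fun a ha c hc =>
      Submodule.mem_inf.mpr ⟨(h a ha c hc).1, (h a ha c hc).2⟩
  exact Submodule.mem_inf.mp (hle hz)

/-- Key lemma: if `U` is a quasi-ideal of `E` then `[U², x] ⊆ U` and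
`[x, U²] ⊆ U` for every `x ∈ E`.  Pure computation with the Leibniz identity. -/
lemma key_lemma (hb : IsLeibniz b) {U E : Submodule F L} (hU : IsSubalgebra b U)
    (hq : IsQuasiIdealIn b U E) {x : L} (hx : x ∈ E) :
    ∀ z ∈ bspan b U U, b z x ∈ U ∧ b x z ∈ U := by
  have hdec : ∀ w ∈ U, (∃ w' ∈ U, ∃ α : F, b w x = w' + α • x) ∧
      (∃ w'' ∈ U, ∃ β : F, b x w = w'' + β • x) := by
    intro w hw
    have hS : Submodule.span F {x} ≤ E := by
      rw [Submodule.span_le]; simpa using hx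
    have h2 := hq.2 (Submodule.span F {x}) hS
    have hxS : x ∈ Submodule.span F ({x} : Set L) := Submodule.mem_span_singleton_self x
    constructor
    · have h3 : b w x ∈ U ⊔ Submodule.span F {x} :=
        h2 (Submodule.mem_sup_left (mem_bspan' b hw hxS))
      obtain ⟨w', hw', z, hz, hdeq⟩ := Submodule.mem_sup.mp h3
      obtain ⟨α, rfl⟩ := Submodule.mem_span_singleton.mp hz
      exact ⟨w', hw', α, hdeq.symm⟩
    · have h3 : b x w ∈ U ⊔ Submodule.span F {x} :=
        h2 (Submodule.mem_sup_right (mem_bspan' b hxS hw))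
      obtain ⟨w', hw', z, hz, hdeq⟩ := Submodule.mem_sup.mp h3
      obtain ⟨α, rfl⟩ := Submodule.mem_span_singleton.mp hz
      exact ⟨w', hw', α, hdeq.symm⟩
  apply bspan_pair_ind b (f := fun z => b z x) (g := fun z => b x z)
    ⟨fun y z => by simp, fun c y => by simp⟩ ⟨fun y z => by simp, fun c y => by simp⟩
  intro u hu v hv
  obtain ⟨⟨u', hu', α, e1⟩, ⟨u₂, hu₂, β, e2⟩⟩ := hdec u hu
  obtain ⟨_, ⟨v₂, hv₂, γ, e4⟩⟩ := hdec v hv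
  constructor
  · -- right: b (b u v) x ∈ U
    have h2 : b (b u v) x = b (b u x) v - b u (b x v) := by rw [hb u x v]; abel
    rw [e1, e4] at h2
    simp only [map_add, map_smul, LinearMap.add_apply, LinearMap.smul_apply] at h2
    rw [e1, e4] at h2
    have key : b (b u v) x = b u' v - b u v₂ + α • v₂ - γ • u' := by
      rw [h2]; module
    rw [key]
    exact sub_mem (add_mem (sub_mem (hU (mem_bspan' b hu' hv)) (hU (mem_bspan' b hu hv₂)))
      (U.smul_mem α hv₂)) (U.smul_mem γ hu')
  · -- left: b x (b u v) ∈ U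
    have h2 : b x (b u v) = b (b x u) v - b (b x v) u := hb x u v
    rw [e2, e4] at h2
    simp only [map_add, map_smul, LinearMap.add_apply, LinearMap.smul_apply] at h2
    rw [e2, e4] at h2
    have key : b x (b u v) = b u₂ v - b v₂ u + β • v₂ - γ • u₂ := by
      rw [h2]; module
    rw [key]
    exact sub_mem (add_mem (sub_mem (hU (mem_bspan' b hu₂ hv)) (hU (mem_bspan' b hv₂ hu)))
      (U.smul_mem β hv₂)) (U.smul_mem γ hu₂)

lemma lc_zero' (K : Submodule F L) : lowerCentral b K 0 = K := rfl

lemma lc_succ' (K : Submodule F L) (n : ℕ) :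
    lowerCentral b K (n + 1) = bspan b (lowerCentral b K n) K := rfl

/-- `[K^a, K^b] ⊆ K^{a+b}` for the lower central series of `K = [U,U]`,
`U` a subalgebra. -/
lemma lc_bracket (hb : IsLeibniz b) {U : Submodule F L} (hU : IsSubalgebra b U) :
    ∀ nb na, ∀ z ∈ lowerCentral b (bspan b U U) na,
      ∀ w ∈ lowerCentral b (bspan b U U) nb,
        b z w ∈ lowerCentral b (bspan b U U) (na + nb + 1) := by
  set K := bspan b U U with hK
  intro nb
  induction nb with
  | zero =>
    intro na z hz w hw
    rw [show na + 0 + 1 = na + 1 from by omega, lc_succ']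
    exact mem_bspan' b hz hw
  | succ nb IH =>
    intro na z hz w hw
    have hle : lowerCentral b K (nb + 1) ≤
        (lowerCentral b K (na + (nb + 1) + 1)).comap (b z) := by
      rw [lc_succ']
      apply bspan_le' b
      intro a ha k hk
      simp only [Submodule.mem_comap]
      rw [hb z a k]
      apply sub_mem
      · have h1 : b z a ∈ lowerCentral b K (na + nb + 1) := IH na z hz a ha
        have h2 : b (b z a) k ∈ bspan b (lowerCentral b K (na + nb + 1)) K :=
          mem_bspan' b h1 hk
        rw [show na + (nb + 1) + 1 = (na + nb + 1) + 1 from by omega, lc_succ']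
        exact h2
      · have h1 : b z k ∈ lowerCentral b K (na + 1) := by
          rw [lc_succ']; exact mem_bspan' b hz hk
        have h2 := IH (na + 1) (b z k) h1 a ha
        rwa [show na + 1 + nb + 1 = na + (nb + 1) + 1 from by omega] at h2
    exact hle hw

lemma hUK' (hb : IsLeibniz b) {U : Submodule F L} (hU : IsSubalgebra b U) :
    ∀ u ∈ U, ∀ k ∈ bspan b U U, b u k ∈ bspan b U U := by
  intro u hu k hk
  have hle : bspan b U U ≤ (bspan b U U).comap (b u) := by
    apply bspan_le' b
    intro v hv w hw
    simp only [Submodule.mem_comap]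
    rw [hb u v w]
    exact sub_mem (mem_bspan' b (hU (mem_bspan' b hu hv)) hw)
      (mem_bspan' b (hU (mem_bspan' b hu hw)) hv)
  exact hle hk

/-- Each term of the lower central series of `K = [U,U]` is stable under
(left and right) multiplication by elements of `U`. -/
lemma lemH (hb : IsLeibniz b) {U : Submodule F L} (hU : IsSubalgebra b U) :
    ∀ t, ∀ u ∈ U, ∀ z ∈ lowerCentral b (bspan b U U) t,
      b z u ∈ lowerCentral b (bspan b U U) t ∧
      b u z ∈ lowerCentral b (bspan b U U) t := by
  set K := bspan b U U with hK
  intro t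
  induction t with
  | zero =>
    intro u hu z hz
    exact ⟨mem_bspan' b (hU hz) hu, hUK' b hb hU u hu z hz⟩
  | succ t IH =>
    intro u hu
    rw [lc_succ']
    apply bspan_pair_ind b (f := fun z => b z u) (g := fun z => b u z)
      ⟨fun y z => by simp, fun c y => by simp⟩ ⟨fun y z => by simp, fun c y => by simp⟩
    intro a ha k hk
    constructor
    · have h2 : b (b a k) u = b a (b k u) + b (b a u) k := by rw [hb a k u]; abel
      rw [h2]
      apply add_mem
      · exact mem_bspan' b ha (mem_bspan' b (hU hk) hu)
      · exact mem_bspan' b (IH u hu a ha).1 hk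
    · have h2 : b u (b a k) = b (b u a) k - b (b u k) a := hb u a k
      rw [h2]
      apply sub_mem
      · exact mem_bspan' b (IH u hu a ha).2 hk
      · have h3 : b u k ∈ lowerCentral b K 0 := hUK' b hb hU u hu k hk
        have h4 := lc_bracket b hb hU t 0 (b u k) h3 a ha
        rwa [show 0 + t + 1 = t + 1 from by omega] at h4

/-- The main chain descent claim: for `x ∈ C (m - s)` and `z ∈ K^{t+1}`
(`K = [H,H]`), `[z,x]` and `[x,z]` lie `s` steps further down the filtration. -/
lemma chainClaim (hb : IsLeibniz b) {H : Submodule F L} (m : ℕ) (C : ℕ → Submodule F L)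
    (hC0 : C 0 = ⊤) (hCm : C m = H)
    (hsub : ∀ i ≤ m, IsSubalgebra b (C i))
    (hqu : ∀ i < m, IsQuasiIdealIn b (C (i + 1)) (C i)) :
    ∀ s, s ≤ m → ∀ x ∈ C (m - s), ∀ t, ∀ z ∈ lowerCentral b (bspan b H H) t,
      b z x ∈ (if s ≤ t then lowerCentral b (bspan b H H) (t - s)
          else C (m - s + t + 1)) ∧
      b x z ∈ (if s ≤ t then lowerCentral b (bspan b H H) (t - s)
          else C (m - s + t + 1)) := by
  have hHsub : IsSubalgebra b H := hCm ▸ hsub m le_rfl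
  set K := bspan b H H with hKdef
  have hKH : K ≤ H := hHsub
  have hdesc : ∀ i ≤ m, H ≤ C i := by
    have haux : ∀ k i', i' + k = m → C m ≤ C i' := by
      intro k
      induction k with
      | zero => intro i' h; rw [show i' = m from by omega]
      | succ k IHk =>
        intro i' h
        exact le_trans (le_trans (IHk (i' + 1) (by omega)) (hqu i' (by omega)).1) le_rfl
    intro i hi
    rw [← hCm]
    exact haux (m - i) i (by omega)
  intro s
  induction s using Nat.strong_induction_on with
  | _ s IH =>
    match s with
    | 0 =>
      intro _ x hx t z hz
      simp only [if_pos (Nat.zero_le t), Nat.sub_zero]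
      have hx' : x ∈ H := by rw [← hCm, show m = m - 0 from by omega]; exact hx
      exact lemH b hb hHsub t x hx' z hz
    | s + 1 =>
      intro hs1 x hx
      have hsm : s + 1 ≤ m := hs1
      have hxj : x ∈ C (m - s - 1) := by
        rwa [show m - (s + 1) = m - s - 1 from by omega] at hx
      have hq' : IsQuasiIdealIn b (C (m - s)) (C (m - s - 1)) := by
        have h := hqu (m - s - 1) (by omega)
        rwa [show m - s - 1 + 1 = m - s from by omega] at h
      have hUsub : IsSubalgebra b (C (m - s)) := hsub (m - s) (by omega)
      have keyAt : ∀ z ∈ bspan b (C (m - s)) (C (m - s)),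
          b z x ∈ C (m - s) ∧ b x z ∈ C (m - s) := key_lemma b hb hUsub hq' hxj
      have hKle : K ≤ bspan b (C (m - s)) (C (m - s)) :=
        bspan_mono' b (hdesc _ (by omega)) (hdesc _ (by omega))
      have bracketK : ∀ t' : ℕ,
          ∀ y ∈ (if s + 1 ≤ t' then lowerCentral b K (t' - (s + 1))
              else C (m - (s + 1) + t' + 1)),
          ∀ k ∈ K,
            b y k ∈ (if s + 1 ≤ t' + 1 then lowerCentral b K (t' + 1 - (s + 1))
              else C (m - (s + 1) + (t' + 1) + 1)) := by
        intro t' y hy k hk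
        by_cases h1 : s + 1 ≤ t'
        · rw [if_pos h1] at hy
          rw [if_pos (by omega), show t' + 1 - (s + 1) = (t' - (s + 1)) + 1 from by omega,
            lc_succ']
          exact mem_bspan' b hy hk
        · rw [if_neg h1] at hy
          have ht' : t' ≤ s := by omega
          have hmem : y ∈ C (m - (s - t')) := by
            rwa [show m - (s - t') = m - (s + 1) + t' + 1 from by omega]
          have hIH := (IH (s - t') (by omega) (by omega) y hmem 0 k hk).2
          by_cases h2 : t' = s
          · rw [if_pos (by omega)] at hIH
            rw [if_pos (by omega), show t' + 1 - (s + 1) = 0 - (s - t') from by omega]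
            exact hIH
          · rw [if_neg (by omega)] at hIH
            rw [if_neg (by omega),
              show m - (s + 1) + (t' + 1) + 1 = m - (s - t') + 0 + 1 from by omega]
            exact hIH
      intro t
      induction t with
      | zero =>
        intro z hz
        have hz' := keyAt z (hKle hz)
        rw [if_neg (by omega : ¬ s + 1 ≤ 0),
          show m - (s + 1) + 0 + 1 = m - s from by omega]
        exact hz'
      | succ t IHt =>
        have Econv : ∀ w : L,
            w ∈ (if s ≤ t then lowerCentral b K (t - s) else C (m - s + t + 1)) →
            w ∈ (if s + 1 ≤ t + 1 then lowerCentral b K (t + 1 - (s + 1))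
              else C (m - (s + 1) + (t + 1) + 1)) := by
          intro w hw
          by_cases h : s ≤ t
          · rw [if_pos h] at hw
            rw [if_pos (by omega), show t + 1 - (s + 1) = t - s from by omega]
            exact hw
          · rw [if_neg h] at hw
            rw [if_neg (by omega),
              show m - (s + 1) + (t + 1) + 1 = m - s + t + 1 from by omega]
            exact hw
        rw [lc_succ']
        apply bspan_pair_ind b (f := fun z => b z x) (g := fun z => b x z)
          ⟨fun y z => by simp, fun c y => by simp⟩ ⟨fun y z => by simp, fun c y => by simp⟩
        intro a ha k hk
        have hkx := keyAt k (hKle hk)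
        constructor
        · have h2 : b (b a k) x = b a (b k x) + b (b a x) k := by rw [hb a k x]; abel
          rw [h2]
          apply add_mem
          · exact Econv _ (IH s (by omega) (by omega) (b k x) hkx.1 t a ha).1
          · exact bracketK t _ (IHt a ha).1 k hk
        · have h2 : b x (b a k) = b (b x a) k - b (b x k) a := hb x a k
          rw [h2]
          apply sub_mem
          · exact bracketK t _ (IHt a ha).2 k hk
          · exact Econv _ (IH s (by omega) (by omega) (b x k) hkx.2 t a ha).2

end AuxLemmas

/-- If `H` is a subquasi-ideal of a Leibniz algebra `L`, then
`(H²)^ω = ⋂_{n ≥ 1} (H²)^n` is a characteristic ideal of `L`. -/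
theorem lcs_omega_characteristic_ideal (b : L →ₗ[F] L →ₗ[F] L) (hb : IsLeibniz b)
    (H : Submodule F L) (hH : IsSubquasiIdeal b H) :
    IsIdeal b (⨅ n : ℕ, lowerCentral b (bspan b H H) n) ∧
    ∀ d : L →ₗ[F] L, IsDerivation b d →
      Submodule.map d (⨅ n : ℕ, lowerCentral b (bspan b H H) n) ≤
        ⨅ n : ℕ, lowerCentral b (bspan b H H) n := by
  obtain ⟨m, C, hC0, hCm, hsub, hqu⟩ := hH
  set K := bspan b H H with hKdef
  have CC := chainClaim b hb m C hC0 hCm hsub hqu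
  have htop : ∀ x : L, x ∈ C (m - m) := by
    intro x; rw [Nat.sub_self, hC0]; trivial
  constructor
  · apply sup_le
    · apply bspan_le' b
      intro w hw x _
      refine (Submodule.mem_iInf _).mpr fun n => ?_
      have hw' : w ∈ lowerCentral b K (n + m) := (Submodule.mem_iInf _).mp hw (n + m)
      have h := (CC m le_rfl x (htop x) (n + m) w hw').1
      rw [if_pos (by omega)] at h
      rwa [show n + m - m = n from by omega] at h
    · apply bspan_le' b
      intro x _ w hw
      refine (Submodule.mem_iInf _).mpr fun n => ?_
      have hw' : w ∈ lowerCentral b K (n + m) := (Submodule.mem_iInf _).mp hw (n + m)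
      have h := (CC m le_rfl x (htop x) (n + m) w hw').2
      rw [if_pos (by omega)] at h
      rwa [show n + m - m = n from by omega] at h
  · intro d hd
    have Dcl : ∀ t, ∀ z ∈ lowerCentral b K t,
        d z ∈ (if m + 1 ≤ t then lowerCentral b K (t - (m + 1)) else C t) := by
      intro t
      induction t with
      | zero =>
        intro z _
        rw [if_neg (by omega), hC0]; trivial
      | succ t IHt =>
        have hle : lowerCentral b K (t + 1) ≤
            (if m + 1 ≤ t + 1 then lowerCentral b K (t + 1 - (m + 1))
              else C (t + 1)).comap d := by
          rw [lc_succ']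
          apply bspan_le' b
          intro a ha k hk
          simp only [Submodule.mem_comap]
          rw [hd a k]
          apply add_mem
          · have h5 := IHt a ha
            by_cases h : m + 1 ≤ t
            · rw [if_pos h] at h5
              rw [if_pos (by omega),
                show t + 1 - (m + 1) = (t - (m + 1)) + 1 from by omega, lc_succ']
              exact mem_bspan' b h5 hk
            · rw [if_neg h] at h5
              have hmem : d a ∈ C (m - (m - t)) := by
                rwa [show m - (m - t) = t from by omega]
              have h6 := (CC (m - t) (by omega) (d a) hmem 0 k hk).2
              by_cases h7 : t = m
              · rw [if_pos (by omega)] at h6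
                rw [if_pos (by omega), show t + 1 - (m + 1) = 0 - (m - t) from by omega]
                exact h6
              · rw [if_neg (by omega)] at h6
                rw [if_neg (by omega),
                  show t + 1 = m - (m - t) + 0 + 1 from by omega]
                exact h6
          · have h8 := (CC m le_rfl (d k) (htop (d k)) t a ha).1
            by_cases h : m ≤ t
            · rw [if_pos h] at h8
              rw [if_pos (by omega), show t + 1 - (m + 1) = t - m from by omega]
              exact h8
            · rw [if_neg h] at h8
              rw [if_neg (by omega), show t + 1 = m - m + t + 1 from by omega]
              exact h8
        intro z hz
        exact hle hz
    intro y hy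
    obtain ⟨w, hw, rfl⟩ := hy
    refine (Submodule.mem_iInf _).mpr fun n => ?_
    have hw' : w ∈ lowerCentral b K (n + (m + 1)) := (Submodule.mem_iInf _).mp hw _
    have h := Dcl (n + (m + 1)) w hw'
    rw [if_pos (by omega)] at h
    rwa [show n + (m + 1) - (m + 1) = n from by omega] at h
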